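/- arXiv:1901.06232 — 9 statements merged into one kernel-verified Lean document; each statement's English description precedes it below -/
import Mathlib

section
/- Let R and R' be commutative rings, D : R → R a derivation (an additive map with D(xy) = x·D(y) + y·D(x)), ε : R → R' a ring homomorphism, and r₁, …, r_N ∈ R with ε(rᵢ) = 0 for all i. Then ε(D^N(r₁ ⋯ r_N)) = N! · ∏_{i=1}^{N} ε(D(rᵢ)). -/
/-! Expand `D^m (r₀ · ∏_{i>0} rᵢ)` by the general Leibniz rule. Fewer than `N` derivatives of a
product of `N` elements of `ker ε` leave some factor undifferentiated, so `ε` kills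
`D^m (∏ rᵢ)` for `m < N`. At `m = N` the only term surviving `ε` is the one with exactly one
derivative on `r₀`, which contributes `N · ε (D r₀) · (N - 1)! ∏_{i>0} ε (D rᵢ)`. -/

open Finset

namespace Derivation

variable {R A B : Type*} [CommSemiring R] [CommSemiring A] [Algebra R A] [CommSemiring B]

theorem iterate_apply_mul (D : Derivation R A A) (n : ℕ) (a b : A) :
    D^[n] (a * b) = ∑ ij ∈ antidiagonal n, n.choose ij.1 • (D^[ij.1] a * D^[ij.2] b) := by
  induction n with
  | zero => simp
  | succ n ih =>
    rw [sum_antidiagonal_choose_succ_nsmul (M := A) (fun i j => D^[i] a * D^[j] b) n]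
    simp only [Function.iterate_succ_apply', ih, map_sum, map_nsmul, leibniz, smul_eq_mul,
      smul_add, sum_add_distrib]
    refine congrArg _ (sum_congr rfl fun ⟨i, j⟩ hij => ?_)
    rw [n.choose_symm_of_eq_add (mem_antidiagonal.1 hij).symm, mul_comm]

theorem map_iterate_apply_mul (D : Derivation R A A) (ε : A →+* B) (n : ℕ) (a b : A) :
    ε (D^[n] (a * b)) =
      ∑ ij ∈ antidiagonal n, (n.choose ij.1 : B) * (ε (D^[ij.1] a) * ε (D^[ij.2] b)) := by
  simp [iterate_apply_mul, nsmul_eq_mul]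

theorem map_iterate_apply_prod_of_lt (D : Derivation R A A) (ε : A →+* B) {N : ℕ}
    (r : Fin N → A) (hr : ∀ i, ε (r i) = 0) {m : ℕ} (hm : m < N) :
    ε (D^[m] (∏ i, r i)) = 0 := by
  induction N generalizing m with
  | zero => exact absurd hm m.not_lt_zero
  | succ N ih =>
    rw [Fin.prod_univ_succ, map_iterate_apply_mul]
    refine sum_eq_zero fun ⟨i, j⟩ hij => ?_
    rw [HasAntidiagonal.mem_antidiagonal] at hij
    rcases Nat.lt_or_ge j N with hj | hj
    · rw [ih _ (fun k => hr k.succ) hj, mul_zero, mul_zero]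
    · obtain rfl : i = 0 := by omega
      rw [Function.iterate_zero_apply, hr, zero_mul, mul_zero]

theorem map_iterate_apply_prod (D : Derivation R A A) (ε : A →+* B) {N : ℕ}
    (r : Fin N → A) (hr : ∀ i, ε (r i) = 0) :
    ε (D^[N] (∏ i, r i)) = (N.factorial : B) * ∏ i, ε (D (r i)) := by
  induction N with
  | zero => simp
  | succ N ih =>
    rw [Fin.prod_univ_succ, map_iterate_apply_mul, sum_eq_single (1, N)]
    · rw [ih _ (fun k => hr k.succ), Fin.prod_univ_succ, Nat.choose_one_right,
        Nat.factorial_succ, Function.iterate_one]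
      push_cast
      ring
    · rintro ⟨i, j⟩ hij hne
      rw [HasAntidiagonal.mem_antidiagonal] at hij
      rcases Nat.lt_or_ge j N with hj | hj
      · rw [map_iterate_apply_prod_of_lt D ε _ (fun k => hr k.succ) hj, mul_zero, mul_zero]
      · obtain rfl : i = 0 := by
          by_contra; exact hne (Prod.ext (by omega) (by omega))
        rw [Function.iterate_zero_apply, hr, zero_mul, mul_zero]
    · exact fun h => absurd (mem_antidiagonal.2 (add_comm 1 N)) h

end Derivation

/-- If `D` is a derivation on a commutative ring `R`, `ε : R → R'` a ring homomorphism,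
and `r₁, …, r_N ∈ ker ε`, then `ε(D^N(r₁ ⋯ r_N)) = N! · ∏ᵢ ε(D(rᵢ))`. -/
theorem derivation_pow_prod_top
    {R R' : Type*} [CommRing R] [CommRing R']
    (D : R → R) (hD_add : ∀ x y, D (x + y) = D x + D y)
    (hD_mul : ∀ x y, D (x * y) = x * D y + y * D x)
    (ε : R →+* R') {N : ℕ} (r : Fin N → R) (hr : ∀ i, ε (r i) = 0) :
    ε (D^[N] (∏ i, r i)) = (Nat.factorial N : R') * ∏ i, ε (D (r i)) :=
  let D' : Derivation ℤ R R :=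
    Derivation.mk' (AddMonoidHom.mk' D hD_add).toIntLinearMap (by simpa using hD_mul)
  D'.map_iterate_apply_prod ε r hr
end

section
/- Let R and R' be commutative rings, D : R → R a derivation (an additive map with D(xy) = x·D(y) + y·D(x)), ε : R → R' a ring homomorphism, and r₁, …, r_N ∈ R with ε(rᵢ) = 0 for all i. If moreover ε(D²(rᵢ)) = 0 for all i, then ε(D^{N+1}(r₁ ⋯ r_N)) = 0. -/
/-!
By the iterated Leibniz rule, `Dᵏ(r · P)` is a sum of multiples of `Dʲ r · Dᵏ⁻ʲ P`. Induction on
the number of factors shows that `ε` kills `Dᵏ(r₁ ⋯ r_N)` for every `k ≤ N + 1` except `k = N`: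
the terms with `j = 0` and `j = 2` die because of the hypotheses on the first factor `r`, all
others because `k - j` avoids the one exceptional exponent of the remaining product `P`.
-/

open Finset

namespace Derivation

variable {R A : Type*} [CommSemiring R] [CommSemiring A] [Algebra R A] (D : Derivation R A A)

theorem leibniz_iterate (x y : A) (n : ℕ) :
    D^[n] (x * y) = ∑ i ∈ range (n + 1), n.choose i • (D^[i] x * D^[n - i] y) := by
  induction n with
  | zero => simp
  | succ n ih =>
    rw [Function.iterate_succ_apply', ih, map_sum,
      sum_choose_succ_nsmul (fun i j => D^[i] x * D^[j] y), ← sum_add_distrib]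
    refine sum_congr rfl fun i hi => ?_
    have hin : n + 1 - i = n - i + 1 := by grind
    simp only [map_nsmul, leibniz, smul_eq_mul, hin, Function.iterate_succ_apply', nsmul_add]
    ring

theorem map_iterate_mul_eq_zero {B : Type*} [CommSemiring B] (ε : A →+* B) {x y : A} {k : ℕ}
    (h : ∀ j ≤ k, ε (D^[j] x) = 0 ∨ ε (D^[k - j] y) = 0) : ε (D^[k] (x * y)) = 0 := by
  rw [leibniz_iterate, map_sum]
  refine sum_eq_zero fun j hj => ?_
  rcases h j (Nat.lt_succ_iff.mp (mem_range.mp hj)) with hx | hy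
  · simp [hx]
  · simp [hy]

theorem map_iterate_prod_eq_zero {B : Type*} [CommSemiring B] (ε : A →+* B) {N : ℕ}
    (r : Fin N → A) (hr : ∀ i, ε (r i) = 0) (hr2 : ∀ i, ε (D (D (r i))) = 0) {k : ℕ}
    (hk : k ≤ N + 1) (hkN : k ≠ N) : ε (D^[k] (∏ i, r i)) = 0 := by
  induction N generalizing k with
  | zero =>
    obtain rfl : k = 1 := by omega
    simp
  | succ N ih =>
    rw [Fin.prod_univ_succ]
    refine D.map_iterate_mul_eq_zero ε fun j hj => ?_
    have ih' {m : ℕ} (hm : m ≤ N + 1) (hmN : m ≠ N) : ε (D^[m] (∏ i : Fin N, r i.succ)) = 0 :=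
      ih (fun i => r i.succ) (fun i => hr i.succ) (fun i => hr2 i.succ) hm hmN
    rcases j with _ | _ | _ | j
    · exact .inl (hr 0)
    · exact .inr (ih' (by omega) (by omega))
    · exact .inl (hr2 0)
    · exact .inr (ih' (by omega) (by omega))

end Derivation

/-- If `D` is a derivation on a commutative ring `R`, `ε : R → R'` a ring homomorphism,
`r₁, …, r_N ∈ ker ε`, and also `ε(D²(rᵢ)) = 0` for all `i`, then
`ε(D^{N+1}(r₁ ⋯ r_N)) = 0`. -/
theorem derivation_pow_succ_prod_eq_zero
    {R R' : Type*} [CommRing R] [CommRing R']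
    (D : R → R) (hD_add : ∀ x y, D (x + y) = D x + D y)
    (hD_mul : ∀ x y, D (x * y) = x * D y + y * D x)
    (ε : R →+* R') {N : ℕ} (r : Fin N → R) (hr : ∀ i, ε (r i) = 0)
    (hr2 : ∀ i, ε (D (D (r i))) = 0) :
    ε (D^[N + 1] (∏ i, r i)) = 0 := by
  obtain ⟨D, rfl⟩ : ∃ D' : Derivation ℤ R R, ⇑D' = D :=
    ⟨.mk' (AddMonoidHom.mk' D hD_add).toIntLinearMap hD_mul, rfl⟩
  exact D.map_iterate_prod_eq_zero ε r hr hr2 le_rfl N.succ_ne_self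
end

section
/- Let R and R' be commutative rings, D : R → R a derivation (an additive map with D(xy) = x·D(y) + y·D(x)), ε : R → R' a ring homomorphism, and r₁, …, r_N ∈ R with ε(rᵢ) = 0 for all i. Suppose there are elements c₁, …, c_N ∈ R with D²(rᵢ) = cᵢ·rᵢ for each i. Then 6 · ε(D^{N+2}(r₁ ⋯ r_N)) = (N+2)! · (∏_{i=1}^{N} ε(D(rᵢ))) · (Σ_{i=1}^{N} ε(cᵢ)). -/
open Finset

section
variable {R R' : Type*} [CommRing R] [CommRing R']

private lemma iterLeibniz (D : R → R) (hD_add : ∀ x y, D (x + y) = D x + D y)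
    (hD_mul : ∀ x y, D (x * y) = x * D y + y * D x) (n : ℕ) (p q : R) :
    D^[n] (p * q) = ∑ k ∈ range (n + 1), n.choose k • (D^[n - k] p * D^[k] q) := by
  let d : R →+ R := AddMonoidHom.mk' D hD_add
  have hd : ∀ x, D x = d x := fun _ => rfl
  induction n with
  | zero => simp
  | succ n IH =>
    calc
      D^[n + 1] (p * q) =
          D (∑ k ∈ range (n + 1), n.choose k • (D^[n - k] p * D^[k] q)) := by
        rw [Function.iterate_succ_apply', IH]
      _ = (∑ k ∈ range (n + 1),
            n.choose k • (D^[n - k + 1] p * D^[k] q)) +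
          ∑ k ∈ range (n + 1),
            n.choose k • (D^[n - k] p * D^[k + 1] q) := by
        rw [hd, map_sum, ← sum_add_distrib]
        refine sum_congr rfl fun k _ => ?_
        rw [map_nsmul, ← hd, hD_mul, ← smul_add]
        congr 1
        rw [Function.iterate_succ_apply', Function.iterate_succ_apply']
        ring
      _ = (∑ k ∈ range (n + 1),
                n.choose (k + 1) • (D^[n - k] p * D^[k + 1] q)) +
              1 • (D^[n + 1] p * D^[0] q) +
            ∑ k ∈ range (n + 1), n.choose k • (D^[n - k] p * D^[k + 1] q) := ?_
      _ = ((∑ k ∈ range (n + 1), n.choose k • (D^[n - k] p * D^[k + 1] q)) +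
              ∑ k ∈ range (n + 1),
                n.choose (k + 1) • (D^[n - k] p * D^[k + 1] q)) +
            1 • (D^[n + 1] p * D^[0] q) := by
        rw [add_comm, add_assoc]
      _ = (∑ i ∈ range (n + 1),
              (n + 1).choose (i + 1) • (D^[n + 1 - (i + 1)] p * D^[i + 1] q)) +
            1 • (D^[n + 1] p * D^[0] q) := by
        simp_rw [Nat.choose_succ_succ, Nat.succ_sub_succ, add_smul, sum_add_distrib]
      _ = ∑ k ∈ range (n + 2),
            (n + 1).choose k • (D^[n + 1 - k] p * D^[k] q) := by
        rw [sum_range_succ' _ (n + 1), Nat.choose_zero_right, tsub_zero]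
    congr
    refine (sum_range_succ' _ _).trans (congr_arg₂ (· + ·) ?_ ?_)
    · rw [sum_range_succ, Nat.choose_succ_self, zero_smul, add_zero]
      refine sum_congr rfl fun k hk => ?_
      rw [mem_range] at hk
      congr
      omega
    · rw [Nat.choose_zero_right, tsub_zero]

end

section
variable {R R' : Type*} [CommRing R] [CommRing R']

private lemma auxMain (D : R → R) (hD_add : ∀ x y, D (x + y) = D x + D y)
    (hD_mul : ∀ x y, D (x * y) = x * D y + y * D x) (ε : R →+* R') :
    ∀ (N : ℕ) (r c : Fin N → R), (∀ i, ε (r i) = 0) → (∀ i, D (D (r i)) = c i * r i) →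
    (∀ m, m < N → ε (D^[m] (∏ i, r i)) = 0) ∧
    ε (D^[N] (∏ i, r i)) = (Nat.factorial N : R') * ∏ i, ε (D (r i)) ∧
    ε (D^[N + 1] (∏ i, r i)) = 0 ∧
    6 * ε (D^[N + 2] (∏ i, r i)) =
      (Nat.factorial (N + 2) : R') * (∏ i, ε (D (r i))) * ∑ i, ε (c i) := by
  have hD1 : D 1 = 0 := by
    have h := hD_mul 1 1
    rw [mul_one, one_mul] at h
    exact (left_eq_add.mp h)
  have hD0 : D 0 = 0 := by
    have h := hD_add 0 0
    rw [add_zero] at h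
    exact (left_eq_add.mp h)
  intro N
  induction N with
  | zero =>
    intro r c hr hc
    refine ⟨fun m hm => absurd hm (Nat.not_lt_zero m), ?_, ?_, ?_⟩
    · simp
    · simp [hD1]
    · have h1 : (∏ i : Fin 0, r i) = 1 := by simp
      rw [show D^[0 + 2] (∏ i : Fin 0, r i) = D (D (∏ i : Fin 0, r i)) from rfl, h1, hD1, hD0]
      simp
  | succ N IH =>
    intro r c hr hc
    obtain ⟨hA, hB, hC, hD6⟩ := IH (fun i => r i.succ) (fun i => c i.succ)
      (fun i => hr _) (fun i => hc _)
    set P := ∏ i : Fin N, r i.succ with hP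
    have hprod : ∏ i, r i = r 0 * P := Fin.prod_univ_succ r
    have e0 : ε (r 0) = 0 := hr 0
    have e2 : ε (D (D (r 0))) = 0 := by rw [hc 0, map_mul, e0, mul_zero]
    have e3 : ε (D (D (D (r 0)))) = ε (c 0) * ε (D (r 0)) := by
      rw [hc 0, hD_mul, map_add, map_mul, map_mul, e0, zero_mul, add_zero]
    have key : ∀ m, ε (D^[m] (r 0 * P)) =
        ∑ k ∈ range (m + 1), (m.choose k : R') * (ε (D^[m - k] (r 0)) * ε (D^[k] P)) := by
      intro m
      rw [iterLeibniz D hD_add hD_mul, map_sum]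
      exact sum_congr rfl fun k _ => by rw [map_nsmul, nsmul_eq_mul, map_mul]
    have keyA : ∀ m, m < N + 1 → ε (D^[m] (r 0 * P)) = 0 := by
      intro m hm
      rw [key]
      refine sum_eq_zero fun k hk => ?_
      rw [mem_range] at hk
      rcases lt_or_ge k N with h | h
      · rw [hA k h, mul_zero, mul_zero]
      · have hk0 : m - k = 0 := by omega
        rw [hk0]
        simp [e0]
    refine ⟨?_, ?_, ?_, ?_⟩
    · intro m hm
      rw [hprod]; exact keyA m hm
    · rw [hprod, key]
      rw [Finset.sum_eq_single N]
      · have : N + 1 - N = 1 := by omega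
        rw [this, hB, Fin.prod_univ_succ (fun i => ε (D (r i)))]
        show ((N+1).choose N : R') * (ε (D (r 0)) * ((Nat.factorial N : R') * _)) = _
        rw [Nat.choose_succ_self_right]
        push_cast [Nat.factorial_succ]
        ring
      · intro k hk hkN
        rw [mem_range] at hk
        rcases lt_or_ge k N with h | h
        · rw [hA k h, mul_zero, mul_zero]
        · have hk0 : N + 1 - k = 0 := by omega
          rw [hk0]
          simp [e0]
      · intro h
        exact absurd (mem_range.mpr (by omega)) h
    · rw [hprod, key]
      refine sum_eq_zero fun k hk => ?_
      rw [mem_range] at hk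
      have : k < N ∨ k = N ∨ k = N + 1 ∨ k = N + 2 := by omega
      rcases this with h | h | h | h
      · rw [hA k h, mul_zero, mul_zero]
      · rw [h]
        have : N + 2 - N = 2 := by omega
        rw [this]
        show (_ : R') * (ε (D (D (r 0))) * _) = 0
        rw [e2, zero_mul, mul_zero]
      · subst h
        rw [hC]
        simp
      · subst h
        have : N + 2 - (N + 2) = 0 := by omega
        rw [this]
        simp [e0]
    · have expand : ε (D^[N + 3] (r 0 * P)) =
          ((N + 3).choose N : R') * (ε (c 0) * ε (D (r 0)) * ((Nat.factorial N : R') * ∏ i : Fin N, ε (D (r i.succ)))) +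
          ((N + 3).choose (N + 2) : R') * (ε (D (r 0)) * ε (D^[N + 2] P)) := by
        rw [key]
        rw [← Finset.sum_subset (s₁ := ({N, N + 2} : Finset ℕ))]
        · rw [Finset.sum_pair (by omega : N ≠ N + 2)]
          have h3 : N + 3 - N = 3 := by omega
          have h1 : N + 3 - (N + 2) = 1 := by omega
          rw [h3, h1]
          show ((N+3).choose N : R') * (ε (D (D (D (r 0)))) * ε (D^[N] P)) + _ = _
          rw [e3, hB]
          simp only [Function.iterate_one]
        · intro k hk
          simp only [mem_insert, mem_singleton] at hk
          rw [mem_range]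
          omega
        · intro k hk hknot
          rw [mem_range] at hk
          simp only [mem_insert, mem_singleton] at hknot
          push_neg at hknot
          have : k < N ∨ k = N + 1 ∨ k = N + 3 := by omega
          rcases this with h | h | h
          · rw [hA k h, mul_zero, mul_zero]
          · subst h; rw [hC]; simp
          · subst h
            have : N + 3 - (N + 3) = 0 := by omega
            rw [this]
            simp [e0]
      have hch3 : (N + 3).choose N = (N + 3).choose 3 := by
        rw [← Nat.choose_symm (by omega : 3 ≤ N + 3)]
        congr 1
      have hch1 : (N + 3).choose (N + 2) = N + 3 := by
        rw [show N + 2 = N + 3 - 1 by omega, Nat.choose_symm (by omega : 1 ≤ N + 3),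
          Nat.choose_one_right]
      have h6 : ((N + 3).choose 3) * 6 * Nat.factorial N = Nat.factorial (N + 3) := by
        have := Nat.choose_mul_factorial_mul_factorial (by omega : 3 ≤ N + 3)
        simpa [show Nat.factorial 3 = 6 from rfl, show N + 3 - 3 = N by omega] using this
      have hgoal : D^[N + 1 + 2] (∏ i, r i) = D^[N + 3] (r 0 * P) := by
        rw [hprod]
      rw [hgoal, expand, hch3, hch1]
      rw [Fin.prod_univ_succ (fun i => ε (D (r i))), Fin.sum_univ_succ (fun i => ε (c i))]
      have h6' : (6 : R') * ((N + 3).choose 3 : R') * (Nat.factorial N : R') = (Nat.factorial (N + 3) : R') := by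
        rw [show (6 : R') = ((6 : ℕ) : R') by norm_num, ← Nat.cast_mul, ← Nat.cast_mul, ← h6]
        ring_nf
      have hfac : ((N + 3 : ℕ) : R') * (Nat.factorial (N + 2) : R') = (Nat.factorial (N + 3) : R') := by
        rw [← Nat.cast_mul, ← Nat.factorial_succ]
      calc 6 * (((N + 3).choose 3 : R') * (ε (c 0) * ε (D (r 0)) * ((Nat.factorial N : R') * ∏ i : Fin N, ε (D (r i.succ)))) +
          ((N + 3 : ℕ) : R') * (ε (D (r 0)) * ε (D^[N + 2] P)))
          = ((6 : R') * ((N + 3).choose 3 : R') * (Nat.factorial N : R')) * (ε (c 0) * ε (D (r 0)) * ∏ i : Fin N, ε (D (r i.succ))) +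
            ((N + 3 : ℕ) : R') * ε (D (r 0)) * (6 * ε (D^[N + 2] P)) := by ring
        _ = (Nat.factorial (N + 3) : R') * (ε (c 0) * ε (D (r 0)) * ∏ i : Fin N, ε (D (r i.succ))) +
            ((N + 3 : ℕ) : R') * ε (D (r 0)) * ((Nat.factorial (N + 2) : R') * (∏ i : Fin N, ε (D (r i.succ))) * ∑ i : Fin N, ε (c i.succ)) := by
          rw [h6', hD6]
        _ = _ := by
          push_cast [show N + 1 + 2 = N + 3 from rfl, Nat.factorial_succ (N + 2)]
          ring

end

/-- If `D` is a derivation on a commutative ring `R`, `ε : R → R'` a ring homomorphism,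
`r₁, …, r_N ∈ ker ε`, and `D²(rᵢ) = cᵢ·rᵢ` for elements `cᵢ ∈ R`, then
`6·ε(D^{N+2}(r₁ ⋯ r_N)) = (N+2)! · (∏ᵢ ε(D(rᵢ))) · (Σᵢ ε(cᵢ))`. -/
theorem derivation_pow_add_two_prod
    {R R' : Type*} [CommRing R] [CommRing R']
    (D : R → R) (hD_add : ∀ x y, D (x + y) = D x + D y)
    (hD_mul : ∀ x y, D (x * y) = x * D y + y * D x)
    (ε : R →+* R') {N : ℕ} (r : Fin N → R) (hr : ∀ i, ε (r i) = 0)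
    (c : Fin N → R) (hc : ∀ i, D (D (r i)) = c i * r i) :
    6 * ε (D^[N + 2] (∏ i, r i)) =
      (Nat.factorial (N + 2) : R') * (∏ i, ε (D (r i))) * (∑ i, ε (c i)) := by
  obtain ⟨-, -, -, h⟩ := auxMain D hD_add hD_mul ε N r c hr hc
  exact h
end

section
/- Let r be a natural number and f a polynomial in r variables with rational coefficients such that f takes integer values at every point of ℤ^r. Then there exists a natural number k such that for all x, y ∈ ℤ^r, the difference f(x + 2^k·y) − f(x) is an even integer. -/
/-!
Clearing denominators, `D • f` is the image of an integer polynomial `g`, and an integer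
polynomial satisfies `g(x + n y) ≡ g(x) (mod n)`. With `n = 2^(a+1)`, where `2^a` is the exact
power of `2` dividing `D`, this gives `2^(a+1) ∣ D (f(x + n y) - f(x))`, so the integer
`f(x + n y) - f(x)` is even.
-/

open MvPolynomial

namespace MvPolynomial

variable {σ : Type*}

theorem dvd_eval_sub_eval {R : Type*} [CommRing R] (g : MvPolynomial σ R) {a : R}
    {x y : σ → R} (h : ∀ i, a ∣ x i - y i) : a ∣ eval x g - eval y g := by
  let π := Ideal.Quotient.mk (Ideal.span {a})
  have hπ : ∀ v, π (eval v g) = eval (π ∘ v) (map π g) := fun v => by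
    rw [eval₂_comp, eval_map]
  have hxy : π ∘ x = π ∘ y := by
    ext i
    exact Ideal.Quotient.eq.2 (Ideal.mem_span_singleton.2 (h i))
  rw [← Ideal.mem_span_singleton, ← Ideal.Quotient.eq, hπ, hπ, hxy]

theorem exists_C_natCast_mul_mem_range_map_intCast (f : MvPolynomial σ ℚ) :
    ∃ D : ℕ, D ≠ 0 ∧ C (D : ℚ) * f ∈ Set.range (map (Int.castRingHom ℚ)) := by
  classical
  refine ⟨∏ m ∈ f.support, (f.coeff m).den,
    Finset.prod_ne_zero_iff.2 fun m _ => (f.coeff m).den_nz, ?_⟩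
  rw [mem_range_map_iff_coeffs_subset]
  intro c hc
  obtain ⟨m, hm, rfl⟩ := mem_coeffs_iff.1 hc
  have hm' : m ∈ f.support := by
    rw [mem_support_iff, coeff_C_mul] at hm
    exact mem_support_iff.2 (right_ne_zero_of_mul hm)
  obtain ⟨e, he⟩ := Finset.dvd_prod_of_mem (fun m => (f.coeff m).den) hm'
  refine ⟨e * (f.coeff m).num, ?_⟩
  rw [coeff_C_mul, he, eq_intCast, Int.cast_mul, ← Rat.mul_den_eq_num]
  push_cast
  ring

end MvPolynomial

theorem Int.dvd_of_pow_factorization_succ_dvd_mul {p n : ℕ} (hp : p.Prime) (hn : n ≠ 0)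
    {t : ℤ} (h : (p : ℤ) ^ (n.factorization p + 1) ∣ n * t) : (p : ℤ) ∣ t := by
  have hdecomp : ((p ^ n.factorization p * (n / p ^ n.factorization p) : ℕ) : ℤ) = n := by
    rw [Nat.ordProj_mul_ordCompl_eq_self]
  rw [← hdecomp, pow_succ, Nat.cast_mul, mul_assoc, Nat.cast_pow] at h
  have hpc : (p : ℤ) ∣ (n / p ^ n.factorization p : ℕ) * t :=
    (mul_dvd_mul_iff_left (pow_ne_zero _ (by exact_mod_cast hp.ne_zero))).1 h
  refine (Int.Prime.dvd_mul' hp hpc).resolve_left fun hc => ?_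
  exact Nat.not_dvd_ordCompl hp hn (by exact_mod_cast hc)

/-- If `f` is a rational polynomial in `r` variables taking integer values on `ℤ^r`,
then there is a `k` such that `f(x + 2^k·y) − f(x)` is an even integer for all
`x, y ∈ ℤ^r`. -/
theorem integer_valued_polynomial_two_power_periodicity
    (r : ℕ) (f : MvPolynomial (Fin r) ℚ)
    (hf : ∀ x : Fin r → ℤ, ∃ z : ℤ,
      MvPolynomial.eval (fun i => (x i : ℚ)) f = (z : ℚ)) :
    ∃ k : ℕ, ∀ x y : Fin r → ℤ, ∃ z : ℤ,
      MvPolynomial.eval (fun i => ((x i + 2 ^ k * y i : ℤ) : ℚ)) f -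
        MvPolynomial.eval (fun i => (x i : ℚ)) f = 2 * (z : ℚ) := by
  obtain ⟨D, hD, g, hg⟩ := exists_C_natCast_mul_mem_range_map_intCast f
  have eval_g : ∀ v : Fin r → ℤ, (eval v g : ℚ) = D * eval (fun i => (v i : ℚ)) f := fun v => by
    rw [← eq_intCast (Int.castRingHom ℚ), eval₂_comp, ← eval_map, hg, eval_mul, eval_C]
    rfl
  set k := D.factorization 2 + 1
  refine ⟨k, fun x y => ?_⟩
  set u : Fin r → ℤ := fun i => x i + 2 ^ k * y i
  obtain ⟨a, ha⟩ := hf u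
  obtain ⟨b, hb⟩ := hf x
  have hdiff : eval u g - eval x g = D * (a - b) := by
    have hq : ((eval u g - eval x g : ℤ) : ℚ) = ((D * (a - b) : ℤ) : ℚ) := by
      push_cast
      rw [eval_g, eval_g, ha, hb]
      ring
    exact_mod_cast hq
  have hcong : (2 : ℤ) ^ k ∣ D * (a - b) := by
    rw [← hdiff]
    exact dvd_eval_sub_eval g fun i => ⟨y i, by simp only [u]; ring⟩
  obtain ⟨z, hz⟩ := Int.dvd_of_pow_factorization_succ_dvd_mul Nat.prime_two hD hcong
  exact ⟨z, by rw [ha, hb]; exact_mod_cast hz⟩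
end

section
/- Let r be a natural number, b₁, …, b_r a basis of the ℚ-vector space ℚ^r, and C = {Σ_i tᵢ·bᵢ : tᵢ ∈ ℚ, tᵢ ≥ 0} the full polyhedral cone spanned by this basis. Let f be a polynomial in r variables with rational coefficients such that f(x) ∈ ℤ for every x ∈ ℤ^r with x ∈ C. Then f(x) ∈ ℤ for every x ∈ ℤ^r. -/
/-!
Pick an integer vector `v` in the interior of the cone (a multiple of `∑ i, b i` clearing
denominators). For `x ∈ ℤ^r` the points `x + n • v` lie in the cone once `n` is large, so the
one-variable polynomial `g n = f (x + n • v)` is integer-valued on all large integers. Since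
`Δ^[deg g + 1] g = 0`, integrality propagates from `[N, ∞)` to all of `ℤ` by induction on the order
of the vanishing difference, using `g (n - 1) = g n - Δ g (n - 1)`. Then `f x = g 0 ∈ ℤ`.
-/

open Filter Polynomial fwdDiff

lemma fwdDiff_iter_comp_addMonoidHom {M M' G : Type*} [AddCommMonoid M] [AddCommMonoid M']
    [AddCommGroup G] (φ : M →+ M') (f : M' → G) (h : M) (n : ℕ) (y : M) :
    Δ_[h] ^[n] (f ∘ φ) y = Δ_[φ h] ^[n] f (φ y) := by
  simp [fwdDiff_iter_eq_sum_shift, map_add, map_nsmul]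

theorem mem_of_fwdDiff_iter_eq_zero_of_forall_ge {G : Type*} [AddCommGroup G] {S : AddSubgroup G}
    {F : ℤ → G} {N : ℤ} {k : ℕ} (hk : Δ_[1] ^[k] F = 0) (hF : ∀ n ≥ N, F n ∈ S) :
    ∀ m, F m ∈ S := by
  induction k generalizing F with
  | zero => simp [show F = 0 from hk]
  | succ k ih =>
    have hΔ : ∀ n, Δ_[1] F n ∈ S :=
      ih (F := Δ_[1] F) (by rwa [Function.iterate_succ_apply] at hk) fun n hn =>
        S.sub_mem (hF (n + 1) (by omega)) (hF n hn)
    intro m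
    rcases le_total N m with hm | hm
    · exact hF m hm
    induction m, hm using Int.leInductionDown with
    | base => exact hF N le_rfl
    | pred n _ hn =>
      have hstep : F (n - 1) = F (n - 1 + 1) - Δ_[1] F (n - 1) := by simp [fwdDiff]
      rw [hstep, sub_add_cancel]
      exact S.sub_mem hn (hΔ _)

theorem Polynomial.eval_intCast_mem_of_forall_ge {R : Type*} [CommRing R] {S : AddSubgroup R}
    (g : R[X]) {N : ℤ} (hg : ∀ n ≥ N, g.eval (n : R) ∈ S) (m : ℤ) : g.eval (m : R) ∈ S := by
  have hk : Δ_[1] ^[g.natDegree + 1] (g.eval ∘ Int.castAddHom R) = 0 := by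
    funext n
    rw [fwdDiff_iter_comp_addMonoidHom, show Int.castAddHom R 1 = 1 from Int.cast_one,
      g.fwdDiff_iter_degree_add_one_eq_zero]
    rfl
  exact mem_of_fwdDiff_iter_eq_zero_of_forall_ge (F := g.eval ∘ Int.castAddHom R) hk hg m

lemma MvPolynomial.exists_polynomial_eval_eq_eval_add_smul {σ R : Type*} [CommSemiring R]
    (f : MvPolynomial σ R) (x v : σ → R) : ∃ g : R[X], ∀ q, g.eval q = eval (x + q • v) f :=
  ⟨aeval (fun i => Polynomial.C (x i) + Polynomial.X * Polynomial.C (v i)) f, fun q => by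
    simp only [← Polynomial.coe_aeval_eq_eval, comp_aeval_apply, map_add, map_mul,
      Polynomial.aeval_C, Polynomial.aeval_X, Algebra.algebraMap_self, RingHom.id_apply,
      aeval_eq_eval]
    rfl⟩

lemma Rat.exists_pos_nat_mul_eq_intCast {ι : Type*} [Fintype ι] (w : ι → ℚ) :
    ∃ d : ℕ, 0 < d ∧ ∃ v : ι → ℤ, ∀ i, (v i : ℚ) = d * w i := by
  classical
  refine ⟨∏ i, (w i).den, Finset.prod_pos fun i _ => (w i).den_pos,
    fun i => (w i).num * ∏ j ∈ Finset.univ.erase i, (w j).den, fun i => ?_⟩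
  rw [← Finset.mul_prod_erase _ _ (Finset.mem_univ i)]
  push_cast
  rw [← Rat.mul_den_eq_num]
  ring

namespace Module.Basis

lemma exists_nonneg_eq_sum_smul_iff {ι R M : Type*} [Fintype ι] [Semiring R] [PartialOrder R]
    [AddCommMonoid M] [Module R M] (b : Basis ι R M) (x : M) :
    (∃ t : ι → R, (∀ i, 0 ≤ t i) ∧ x = ∑ i, t i • b i) ↔ ∀ i, 0 ≤ b.repr x i := by
  constructor
  · rintro ⟨t, ht, rfl⟩
    simpa only [b.repr_sum_self] using ht
  · exact fun h => ⟨b.repr x, h, (b.sum_repr x).symm⟩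

lemma exists_intCast_repr_pos {ι : Type*} [Fintype ι] (b : Basis ι ℚ (ι → ℚ)) :
    ∃ v : ι → ℤ, ∀ i, 0 < b.repr (fun j => (v j : ℚ)) i := by
  obtain ⟨d, hd, v, hv⟩ := Rat.exists_pos_nat_mul_eq_intCast (∑ i, b i)
  have hvd : (fun j => (v j : ℚ)) = (d : ℚ) • ∑ i, b i := funext fun j => by simpa using hv j
  exact ⟨v, fun i => by simp [hvd, map_sum, hd]⟩

lemma eventually_repr_add_intCast_smul_nonneg {ι 𝕜 M : Type*} [Finite ι] [Field 𝕜]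
    [LinearOrder 𝕜] [IsStrictOrderedRing 𝕜] [Archimedean 𝕜] [AddCommGroup M] [Module 𝕜 M]
    (b : Basis ι 𝕜 M) (x : M) {v : M} (hv : ∀ i, 0 < b.repr v i) :
    ∀ᶠ n : ℤ in atTop, ∀ i, 0 ≤ b.repr (x + (n : 𝕜) • v) i := by
  simp only [map_add, map_smul, Finsupp.add_apply, Finsupp.smul_apply, smul_eq_mul]
  exact eventually_all.2 fun i => (tendsto_atTop_add_const_left _ _
    (tendsto_intCast_atTop_atTop.atTop_mul_const (hv i))).eventually_ge_atTop 0

end Module.Basis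

/-- If a rational polynomial in `r` variables takes integer values on all integer
points of a full polyhedral cone `C` (spanned by a `ℚ`-basis of `ℚ^r`), then it takes
integer values on all of `ℤ^r`. -/
theorem integer_valued_on_cone_integer_valued
    (r : ℕ) (b : Module.Basis (Fin r) ℚ (Fin r → ℚ))
    (C : Set (Fin r → ℚ))
    (hC : C = {x | ∃ t : Fin r → ℚ, (∀ i, 0 ≤ t i) ∧ x = ∑ i, t i • b i})
    (f : MvPolynomial (Fin r) ℚ)
    (hf : ∀ x : Fin r → ℤ, (fun i => (x i : ℚ)) ∈ C →
      ∃ z : ℤ, MvPolynomial.eval (fun i => (x i : ℚ)) f = (z : ℚ)) :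
    ∀ x : Fin r → ℤ, ∃ z : ℤ, MvPolynomial.eval (fun i => (x i : ℚ)) f = (z : ℚ) := by
  intro x
  obtain ⟨v, hv⟩ := b.exists_intCast_repr_pos
  obtain ⟨N, hN⟩ := eventually_atTop.1 (b.eventually_repr_add_intCast_smul_nonneg _ hv)
  obtain ⟨g, hg⟩ := f.exists_polynomial_eval_eq_eval_add_smul (fun i => (x i : ℚ)) _
  have hcast (n : ℤ) : (fun i => (x i : ℚ)) + (n : ℚ) • (fun i => (v i : ℚ))
      = fun i => ((x i + n * v i : ℤ) : ℚ) := by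
    funext i
    push_cast
    simp
  have hline : ∀ n ≥ N, g.eval (n : ℚ) ∈ (Int.castAddHom ℚ).range := by
    intro n hn
    obtain ⟨z, hz⟩ := hf (fun i => x i + n * v i) <| by
      rw [hC, Set.mem_ofPred_eq, b.exists_nonneg_eq_sum_smul_iff, ← hcast]
      exact hN n hn
    exact ⟨z, by rw [hg, hcast, hz]; rfl⟩
  obtain ⟨z, hz⟩ := g.eval_intCast_mem_of_forall_ge hline 0
  exact ⟨z, by simpa [hg] using hz.symm⟩
end

section
/- Let r be a natural number, b₁, …, b_r a basis of the ℚ-vector space ℚ^r, and C = {Σ_i tᵢ·bᵢ : tᵢ ∈ ℚ, tᵢ ≥ 0} the full polyhedral cone spanned by this basis. Let p ∈ ℤ^r. Then: (1) the intersection C ∩ (p + C) is a translate of C, i.e. there exists q ∈ ℚ^r with C ∩ (p + C) = q + C; (2) there exists x ∈ ℤ^r with x ∈ C ∩ (p + C); and (3) for any such x, setting v = x − p, one has p + n·v ∈ ℤ^r ∩ C ∩ (p + C) for every integer n ≥ 1. -/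
/-!
In the coordinates of the basis, `C` is the nonnegative orthant and `p + C` the orthant shifted
to `p`, so their intersection is the orthant shifted to the coordinatewise maximum `q = p ⊔ 0`.
Since `q ∈ C`, every multiple `N • q` with `N ≥ 1` lies in `q + C`; clearing the denominators of
`q` gives an integer point. Finally `p + n • (x - p) = x + (n - 1) • (x - p)` with `x - p ∈ C`,
and `q + C` is stable under adding elements of `C`.
-/

open Module

theorem mem_image_add_left_iff_sub_mem {G : Type*} [AddCommGroup G] {s : Set G} {a y : G} :
    y ∈ (fun c => a + c) '' s ↔ y - a ∈ s := by
  rw [Set.image_add_left, Set.mem_preimage, neg_add_eq_sub]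

theorem exists_pos_nat_smul_eq_intCast {ι : Type*} [Fintype ι] (q : ι → ℚ) :
    ∃ N : ℕ, 0 < N ∧ ∃ z : ι → ℤ, (fun i => (z i : ℚ)) = (N : ℚ) • q := by
  refine ⟨∏ i, (q i).den, Finset.prod_pos fun i _ => (q i).den_pos, ?_⟩
  have hdvd : ∀ i, (q i).den ∣ ∏ j, (q j).den := fun i =>
    Finset.dvd_prod_of_mem _ (Finset.mem_univ i)
  choose k hk using hdvd
  refine ⟨fun i => k i * (q i).num, funext fun i => ?_⟩
  simp only [Pi.smul_apply, smul_eq_mul, hk i, Nat.cast_mul, Int.cast_mul, Int.cast_natCast,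
    ← Rat.den_mul_eq_num]
  ring

namespace Module.Basis

variable {ι K V : Type*} [Field K] [LinearOrder K] [AddCommGroup V] [Module K V]
  (b : Basis ι K V)

def cone : Set V := {y | 0 ≤ b.repr y}

variable {b}

theorem mem_cone {y : V} : y ∈ b.cone ↔ 0 ≤ b.repr y := Iff.rfl

theorem setOf_sum_smul_eq_cone [Fintype ι] :
    {x | ∃ t : ι → K, (∀ i, 0 ≤ t i) ∧ x = ∑ i, t i • b i} = b.cone := by
  ext y
  constructor
  · rintro ⟨t, ht, rfl⟩
    exact Finsupp.le_def.2 fun i => by rw [b.repr_sum_self]; exact ht i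
  · intro hy
    exact ⟨fun i => b.repr y i, Finsupp.le_def.1 hy, (b.sum_repr y).symm⟩

theorem sup_zero_mem_cone (p : V) : b.repr.symm (b.repr p ⊔ 0) ∈ b.cone := by
  simp [mem_cone]

variable [IsStrictOrderedRing K]

theorem add_mem_cone {y c : V} (hy : y ∈ b.cone) (hc : c ∈ b.cone) : y + c ∈ b.cone := by
  simpa [mem_cone] using add_nonneg hy hc

theorem smul_mem_cone {t : K} {c : V} (ht : 0 ≤ t) (hc : c ∈ b.cone) : t • c ∈ b.cone := by
  simpa [mem_cone] using smul_nonneg ht hc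

theorem mem_image_add_left_cone {q y : V} :
    y ∈ (fun c => q + c) '' b.cone ↔ b.repr q ≤ b.repr y := by
  rw [mem_image_add_left_iff_sub_mem, mem_cone, map_sub, sub_nonneg]

theorem add_mem_image_add_left_cone {q y c : V} (hy : y ∈ (fun c => q + c) '' b.cone)
    (hc : c ∈ b.cone) : y + c ∈ (fun c => q + c) '' b.cone := by
  rw [mem_image_add_left_iff_sub_mem] at hy ⊢
  simpa [add_sub_right_comm] using add_mem_cone hy hc

theorem smul_mem_image_add_left_cone_self {q : V} (hq : q ∈ b.cone) {t : K} (ht : 1 ≤ t) :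
    t • q ∈ (fun c => q + c) '' b.cone := by
  rw [mem_image_add_left_iff_sub_mem]
  simpa [sub_smul] using smul_mem_cone (sub_nonneg.2 ht) hq

theorem cone_inter_image_add_left (p : V) :
    b.cone ∩ (fun c => p + c) '' b.cone =
      (fun c => b.repr.symm (b.repr p ⊔ 0) + c) '' b.cone := by
  ext y
  simp only [Set.mem_inter_iff, mem_image_add_left_cone, mem_cone, LinearEquiv.apply_symm_apply,
    sup_le_iff, and_comm]

end Module.Basis

/-- For a full polyhedral cone `C ⊆ ℚ^r` spanned by a `ℚ`-basis and an integer vector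
`p`: (1) `C ∩ (p + C)` is a translate of `C`; (2) there is an integer vector in
`C ∩ (p + C)`; (3) for any such integer vector `x`, setting `v = x − p`, the point
`p + n·v` is an integer vector lying in `C ∩ (p + C)` for every integer `n ≥ 1`. -/
theorem cone_translate_lemma
    (r : ℕ) (b : Module.Basis (Fin r) ℚ (Fin r → ℚ))
    (C : Set (Fin r → ℚ))
    (hC : C = {x | ∃ t : Fin r → ℚ, (∀ i, 0 ≤ t i) ∧ x = ∑ i, t i • b i})
    (p : Fin r → ℤ) :
    (∃ q : Fin r → ℚ, C ∩ ((fun c => (fun i => (p i : ℚ)) + c) '' C) =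
        (fun c => q + c) '' C) ∧
    (∃ x : Fin r → ℤ, (fun i => (x i : ℚ)) ∈
        C ∩ ((fun c => (fun i => (p i : ℚ)) + c) '' C)) ∧
    (∀ x : Fin r → ℤ, (fun i => (x i : ℚ)) ∈
        C ∩ ((fun c => (fun i => (p i : ℚ)) + c) '' C) →
      ∀ n : ℤ, 1 ≤ n →
        (fun i => ((p i + n * (x i - p i) : ℤ) : ℚ)) ∈
          C ∩ ((fun c => (fun i => (p i : ℚ)) + c) '' C)) := by
  subst hC
  rw [Basis.setOf_sum_smul_eq_cone]
  set P : Fin r → ℚ := fun i => (p i : ℚ)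
  set q := b.repr.symm (b.repr P ⊔ 0)
  have hS : b.cone ∩ (fun c => P + c) '' b.cone = (fun c => q + c) '' b.cone :=
    Basis.cone_inter_image_add_left P
  refine ⟨⟨q, hS⟩, ?_, fun x hx n hn => ?_⟩
  · obtain ⟨N, hN, z, hz⟩ := exists_pos_nat_smul_eq_intCast q
    refine ⟨z, ?_⟩
    rw [hS, hz]
    exact Basis.smul_mem_image_add_left_cone_self (Basis.sup_zero_mem_cone P)
      (by exact_mod_cast hN)
  · set X : Fin r → ℚ := fun i => (x i : ℚ)
    have hXP : X - P ∈ b.cone := mem_image_add_left_iff_sub_mem.1 hx.2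
    have hpoint : (fun i => ((p i + n * (x i - p i) : ℤ) : ℚ)) = X + ((n : ℚ) - 1) • (X - P) := by
      funext i
      simp only [X, P, Pi.add_apply, Pi.smul_apply, Pi.sub_apply, smul_eq_mul]
      push_cast
      ring
    rw [hS] at hx ⊢
    rw [hpoint]
    exact Basis.add_mem_image_add_left_cone hx
      (Basis.smul_mem_cone (sub_nonneg.2 (by exact_mod_cast hn)) hXP)
end

section
/- Let a and b be natural numbers with a ≡ b (mod 2). Then 4 divides (b+1)·C(a+2, 3) + (a+1)·C(b+2, 3). -/
lemma two_mul_choose_two (a : ℕ) : 2 * Nat.choose (a + 2) 2 = (a + 2) * (a + 1) := by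
  induction a with
  | zero => rfl
  | succ n ih =>
    have e : n + 1 + 2 = (n + 2) + 1 := by ring
    rw [e, Nat.choose_succ_succ, Nat.mul_add, ih, Nat.choose_one_right]
    ring

lemma six_mul_choose_three (a : ℕ) : 6 * Nat.choose (a + 2) 3 = (a + 2) * (a + 1) * a := by
  induction a with
  | zero => rfl
  | succ n ih =>
    have e : n + 1 + 2 = (n + 2) + 1 := by ring
    rw [e, Nat.choose_succ_succ, Nat.mul_add, ih]
    have h2 : 6 * Nat.choose (n + 2) 2 = 3 * ((n + 2) * (n + 1)) := by
      calc 6 * Nat.choose (n + 2) 2 = 3 * (2 * Nat.choose (n + 2) 2) := by ring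
        _ = 3 * ((n + 2) * (n + 1)) := by rw [two_mul_choose_two]
    rw [h2]; ring

/-- For natural numbers `a ≡ b (mod 2)`, one has
`4 ∣ (b+1)·C(a+2,3) + (a+1)·C(b+2,3)`. -/
theorem so4_obstruction_div_four (a b : ℕ) (h : a % 2 = b % 2) :
    4 ∣ (b + 1) * Nat.choose (a + 2) 3 + (a + 1) * Nat.choose (b + 2) 3 := by
  have key : 24 ∣ 6 * ((b + 1) * Nat.choose (a + 2) 3 + (a + 1) * Nat.choose (b + 2) 3) := by
    have e : 6 * ((b + 1) * Nat.choose (a + 2) 3 + (a + 1) * Nat.choose (b + 2) 3)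
        = (b + 1) * (6 * Nat.choose (a + 2) 3) + (a + 1) * (6 * Nat.choose (b + 2) 3) := by ring
    rw [e, six_mul_choose_three, six_mul_choose_three]
    rw [← ZMod.natCast_eq_zero_iff]
    push_cast
    rcases Nat.even_or_odd a with ⟨m, hm⟩ | ⟨m, hm⟩
    · have hb : b % 2 = 0 := by omega
      obtain ⟨n, hn⟩ : ∃ n, b = 2 * n := ⟨b / 2, by omega⟩
      subst hn; subst hm
      push_cast
      have : ∀ x y : ZMod 24, (2*y+1) * (x+x+2) * (x+x+1) * (x+x)
          + (2*x+1) * (2*y+2) * (2*y+1) * (2*y) = 0 := by decide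
      have := this (m : ZMod 24) (n : ZMod 24)
      push_cast at this ⊢
      linear_combination this
    · have hb : b % 2 = 1 := by omega
      obtain ⟨n, hn⟩ : ∃ n, b = 2 * n + 1 := ⟨b / 2, by omega⟩
      subst hn; subst hm
      have : ∀ x y : ZMod 24, (2*y+1+1) * (2*x+1+2) * (2*x+1+1) * (2*x+1)
          + (2*x+1+1) * (2*y+1+2) * (2*y+1+1) * (2*y+1) = 0 := by decide
      have := this (m : ZMod 24) (n : ZMod 24)
      push_cast at this ⊢
      linear_combination this
  have : 24 = 6 * 4 := rfl
  rw [this] at key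
  exact (mul_dvd_mul_iff_left (by norm_num : (6:ℕ) ≠ 0)).mp key
end

section
/- For every integer m ≥ 1, the central binomial coefficient C(2m, m) is even; moreover 4 divides C(2m, m) if and only if m is not a power of 2 (that is, unless m = 2^k for some natural number k). -/
lemma sum_digits_two_aux : ∀ m : ℕ, 1 ≤ m →
    1 ≤ (Nat.digits 2 m).sum ∧ ((Nat.digits 2 m).sum = 1 ↔ ∃ k : ℕ, m = 2 ^ k) := by
  intro m
  induction m using Nat.strong_induction_on with
  | _ m ih =>
    intro hm
    rw [Nat.digits_def' (by norm_num) (by omega)]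
    simp only [List.sum_cons]
    rcases Nat.even_or_odd m with he | ho
    · have h2 : m % 2 = 0 := Nat.even_iff.mp he
      have hq : 1 ≤ m / 2 := by omega
      obtain ⟨h1, h2'⟩ := ih (m / 2) (by omega) hq
      rw [h2]
      refine ⟨by omega, ?_⟩
      simp only [Nat.zero_add, h2']
      constructor
      · rintro ⟨k, hk⟩
        exact ⟨k + 1, by omega⟩
      · rintro ⟨k, hk⟩
        rcases k with _ | k
        · omega
        · exact ⟨k, by rw [pow_succ] at hk; omega⟩
    · have h2 : m % 2 = 1 := Nat.odd_iff.mp ho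
      rw [h2]
      refine ⟨by omega, ?_⟩
      constructor
      · intro h
        have hs : (Nat.digits 2 (m / 2)).sum = 0 := by omega
        have hq : m / 2 = 0 := by
          by_contra hq
          have := (ih (m / 2) (by omega) (by omega)).1
          omega
        exact ⟨0, by omega⟩
      · rintro ⟨k, hk⟩
        rcases k with _ | k
        · have : m = 1 := by omega
          subst this
          norm_num
        · exfalso
          rw [pow_succ] at hk
          omega

lemma padic_central (m : ℕ) (hm : 1 ≤ m) :
    padicValNat 2 (Nat.choose (2 * m) m) = (Nat.digits 2 m).sum := by
  haveI : Fact (Nat.Prime 2) := ⟨Nat.prime_two⟩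
  have h := sub_one_mul_padicValNat_choose_eq_sub_sum_digits (p := 2) (k := m) (n := 2 * m)
    (by omega)
  have h2m : Nat.digits 2 (2 * m) = 0 :: Nat.digits 2 m := by
    rw [Nat.digits_def' (by norm_num) (by omega)]
    congr 1
    · omega
    · congr 1; omega
  have hsub : 2 * m - m = m := by omega
  rw [hsub, h2m] at h
  simp only [List.sum_cons, Nat.zero_add] at h
  omega

/-- For `m ≥ 1`, the central binomial coefficient `C(2m, m)` is even, and is
divisible by `4` iff `m` is not a power of `2`. -/
theorem central_binom_even_and_four_dvd (m : ℕ) (hm : 1 ≤ m) :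
    2 ∣ Nat.choose (2 * m) m ∧
    (4 ∣ Nat.choose (2 * m) m ↔ ¬ ∃ k : ℕ, m = 2 ^ k) := by
  have hpos : 0 < Nat.choose (2 * m) m := Nat.choose_pos (by omega)
  have hfac : (Nat.choose (2 * m) m).factorization 2 = (Nat.digits 2 m).sum := by
    rw [Nat.factorization_def _ Nat.prime_two, padic_central m hm]
  obtain ⟨h1, h2⟩ := sum_digits_two_aux m hm
  constructor
  · have := (Nat.Prime.pow_dvd_iff_le_factorization (k := 1) (n := Nat.choose (2 * m) m) Nat.prime_two hpos.ne').mpr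
      (by rw [hfac]; omega)
    simpa using this
  · have h4 : (4 : ℕ) = 2 ^ 2 := by norm_num
    rw [h4, Nat.Prime.pow_dvd_iff_le_factorization (k := 2) (n := Nat.choose (2 * m) m) Nat.prime_two hpos.ne', hfac]
    rw [← h2]
    omega
end

section
/- Let n and d be positive integers with 2d dividing n. Then 8d divides n·C(n, n/2) if and only if it is not the case that n is a power of 2 and n = 2d. -/
open Nat

private def sbit (m : ℕ) : ℕ := (Nat.digits 2 m).sum

private lemma sbit_rec (m : ℕ) (hm : 0 < m) : sbit m = m % 2 + sbit (m / 2) := by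
  unfold sbit
  rw [Nat.digits_def' (by norm_num : 1 < 2) hm]
  simp

private lemma sbit_pos (m : ℕ) (hm : 0 < m) : 0 < sbit m := by
  induction m using Nat.strong_induction_on with
  | _ m ih =>
    rw [sbit_rec m hm]
    rcases Nat.even_or_odd m with he | ho
    · have h0 : m % 2 = 0 := Nat.even_iff.mp he
      have h2 : 0 < m / 2 := by omega
      have := ih (m / 2) (by omega) h2
      omega
    · have : m % 2 = 1 := Nat.odd_iff.mp ho
      omega

private lemma sbit_two_mul (m : ℕ) (hm : 0 < m) : sbit (2 * m) = sbit m := by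
  rw [sbit_rec (2 * m) (by omega)]
  simp [Nat.mul_div_cancel_left m (by norm_num : 0 < 2)]

private lemma sbit_eq_one_iff (m : ℕ) : sbit m = 1 ↔ ∃ k, m = 2 ^ k := by
  induction m using Nat.strong_induction_on with
  | _ m ih =>
    rcases Nat.eq_zero_or_pos m with rfl | hm
    · simp [sbit]
      intro k; positivity
    rw [sbit_rec m hm]
    rcases Nat.even_or_odd m with he | ho
    · have h0 : m % 2 = 0 := Nat.even_iff.mp he
      have h2 : 0 < m / 2 := by omega
      rw [h0, zero_add, ih (m / 2) (by omega)]
      constructor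
      · rintro ⟨k, hk⟩; exact ⟨k + 1, by rw [pow_succ]; omega⟩
      · rintro ⟨k, hk⟩
        rcases k with _ | k
        · omega
        · exact ⟨k, by rw [pow_succ] at hk; omega⟩
    · have h1 : m % 2 = 1 := Nat.odd_iff.mp ho
      rw [h1]
      constructor
      · intro h
        have hs : sbit (m / 2) = 0 := by omega
        have : m / 2 = 0 := by
          by_contra hc
          have := sbit_pos (m / 2) (by omega)
          omega
        exact ⟨0, by omega⟩
      · rintro ⟨k, rfl⟩
        have hk : k = 0 := by
          rcases k with _ | k
          · rfl
          · exfalso; rw [pow_succ] at h1; omega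
        subst hk
        simp [sbit]

private lemma v2_central (m : ℕ) (hm : 0 < m) :
    padicValNat 2 (Nat.choose (2 * m) m) = sbit m := by
  have h := sub_one_mul_padicValNat_choose_eq_sub_sum_digits (p := 2)
    (k := m) (n := 2 * m) (by omega)
  have hsub : 2 * m - m = m := by omega
  rw [hsub] at h
  have h2 : (Nat.digits 2 (2 * m)).sum = (Nat.digits 2 m).sum := sbit_two_mul m hm
  show padicValNat 2 (Nat.choose (2 * m) m) = (Nat.digits 2 m).sum
  omega

private lemma four_dvd_iff (a : ℕ) (ha : 0 < a) :
    4 ∣ a ↔ 2 ≤ padicValNat 2 a := by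
  have := Fact.mk Nat.prime_two
  rw [show (4 : ℕ) = 2 ^ 2 by norm_num, padicValNat_dvd_iff_le (by omega)]

/-- For positive integers `n, d` with `2d ∣ n`: `8d` divides `n·C(n, n/2)` iff
it is not the case that `n` is a power of `2` and `n = 2d`. -/
theorem sl_n_middle_exterior_criterion (n d : ℕ) (hn : 0 < n) (hd : 0 < d)
    (hdvd : 2 * d ∣ n) :
    8 * d ∣ n * Nat.choose n (n / 2) ↔ ¬ ((∃ k : ℕ, n = 2 ^ k) ∧ n = 2 * d) := by
  obtain ⟨t, ht⟩ := hdvd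
  have ht0 : 0 < t := by
    rcases Nat.eq_zero_or_pos t with rfl | h
    · omega
    · exact h
  set m : ℕ := d * t with hm
  have hm0 : 0 < m := by positivity
  have hn2 : n = 2 * m := by rw [ht, hm]; ring
  have hhalf : n / 2 = m := by omega
  have hC0 : 0 < Nat.choose (2 * m) m := Nat.choose_pos (by omega)
  have hvC : padicValNat 2 (Nat.choose (2 * m) m) = sbit m := v2_central m hm0
  have key : 8 * d ∣ 2 * m * Nat.choose (2 * m) m ↔ 4 ∣ t * Nat.choose (2 * m) m := by
    have e1 : 2 * m * Nat.choose (2 * m) m = 2 * d * (t * Nat.choose (2 * m) m) := by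
      rw [hm]; ring
    have e2 : 8 * d = 2 * d * 4 := by ring
    rw [e1, e2, Nat.mul_dvd_mul_iff_left (show 0 < 2 * d by omega)]
  have hprop : 4 ∣ t * Nat.choose (2 * m) m ↔
      2 ≤ padicValNat 2 t + sbit m := by
    rw [four_dvd_iff _ (by positivity), padicValNat.mul (by omega) (by omega), hvC]
  rw [hhalf, hn2, key, hprop]
  constructor
  · rintro h ⟨⟨k, hk⟩, hnd⟩
    have hmd : m = d := by omega
    have hts : t = 1 := Nat.eq_of_mul_eq_mul_left hd (by omega)
    have hmp : sbit m = 1 := by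
      rw [sbit_eq_one_iff]
      rcases k with _ | k
      · norm_num at hk
      · exact ⟨k, by rw [pow_succ] at hk; omega⟩
    have hvt : padicValNat 2 t = 0 := by rw [hts]; exact padicValNat.one
    omega
  · intro h
    by_cases hpow : ∃ k : ℕ, 2 * m = 2 ^ k
    · obtain ⟨k, hk⟩ := hpow
      have htne : t ≠ 1 := by
        intro h1
        have hmd : m = d := by rw [hm, h1, mul_one]
        exact h ⟨⟨k, hk⟩, by omega⟩
      have hmp : sbit m = 1 := by
        rw [sbit_eq_one_iff]
        rcases k with _ | k
        · norm_num at hk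
        · exact ⟨k, by rw [pow_succ] at hk; omega⟩
      have htd : t ∣ 2 ^ k := ⟨2 * d, by rw [← hk, hm]; ring⟩
      obtain ⟨j, hj, rfl⟩ := (Nat.dvd_prime_pow Nat.prime_two).mp htd
      have hj0 : j ≠ 0 := by
        intro h0; subst h0; simp at htne
      have : 1 ≤ padicValNat 2 (2 ^ j) := by
        rw [padicValNat.prime_pow]; omega
      omega
    · have hmp : sbit m ≠ 1 := by
        intro h1
        rw [sbit_eq_one_iff] at h1
        obtain ⟨k, hk⟩ := h1
        exact hpow ⟨k + 1, by rw [pow_succ]; omega⟩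
      have := sbit_pos m hm0
      omega
end
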